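/- arXiv:1607.04703 — 7 statements merged into one kernel-verified Lean document; each statement's English description precedes it below -/
import Mathlib

section
/- Let (X, ρ) be a compact metric space and let k ≥ 1 be an integer. Then the following are equivalent: (a) for every ε > 0 there is a finite open cover of X in which every set has diameter at most ε and every point of X belongs to at most k sets of the cover; (b) for every ε > 0 there exist a real number δ with 0 < δ < ε, a finite set V, and an assignment to each point x ∈ X of a nonempty subset e_x ⊆ V such that: (1) |e_x| ≤ k for every x ∈ X; (2) e_x ∩ e_y ≠ ∅ for all x, y ∈ X with ρ(x,y) < δ; (3) ρ(x,y) < ε for all x, y ∈ X with e_x ∩ e_y ≠ ∅; and (4) for every v ∈ V the set {x ∈ X : v ∈ e_x} is open in X. -/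
/-- Let `(X, ρ)` be a compact metric space and `k ≥ 1` an integer.
The following are equivalent:
(a) for every `ε > 0` there is a finite open cover of `X` in which every set has diameter
    at most `ε` and every point of `X` belongs to at most `k` sets of the cover;
(b) for every `ε > 0` there exist `0 < δ < ε`, a finite set `V` (of "hypergraph vertices"),
    and nonempty edges `e x ⊆ V` assigned to the points `x ∈ X` such that
    (1) `|e x| ≤ k`; (2) `e x ∩ e y ≠ ∅` whenever `ρ(x,y) < δ`;
    (3) `ρ(x,y) < ε` whenever `e x ∩ e y ≠ ∅`; and
    (4) for every `v ∈ V` the set `{x | v ∈ e x}` is open. -/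
theorem lebesgue_dim_iff_hypergraph_approx
    {X : Type*} [MetricSpace X] [CompactSpace X] (k : ℕ) (hk : 1 ≤ k) :
    (∀ ε : ℝ, 0 < ε → ∃ (ι : Type) (_ : Fintype ι) (C : ι → Set X),
        (∀ i, IsOpen (C i)) ∧ (⋃ i, C i) = Set.univ ∧
        (∀ i, Metric.diam (C i) ≤ ε) ∧
        (∀ x : X, Set.ncard {i | x ∈ C i} ≤ k)) ↔
    (∀ ε : ℝ, 0 < ε → ∃ δ : ℝ, 0 < δ ∧ δ < ε ∧
      ∃ (Vset : Finset ℕ) (e : X → Finset ℕ),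
        (∀ x, e x ⊆ Vset) ∧
        (∀ x, (e x).Nonempty) ∧
        (∀ x, (e x).card ≤ k) ∧
        (∀ x y : X, dist x y < δ → (e x ∩ e y).Nonempty) ∧
        (∀ x y : X, (e x ∩ e y).Nonempty → dist x y < ε) ∧
        (∀ v ∈ Vset, IsOpen {x : X | v ∈ e x})) := by
  classical
  constructor
  · intro ha ε hε
    obtain ⟨ι, hι, C, hopen, hcover, hdiam, hcard⟩ := ha (ε/2) (by linarith)
    obtain ⟨δ0, hδ0, hball⟩ := lebesgue_number_lemma_of_metric isCompact_univ hopen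
      (by rw [hcover])
    set n := Fintype.card ι with hn
    set eqv := (Fintype.equivFin ι) with heqv
    refine ⟨min δ0 (ε/2), lt_min hδ0 (by linarith),
      lt_of_le_of_lt (min_le_right _ _) (by linarith), Finset.range n,
      fun x => (Finset.univ.filter (fun j : Fin n => x ∈ C (eqv.symm j))).image Fin.val,
      ?_, ?_, ?_, ?_, ?_, ?_⟩
    · intro x v hv
      simp only [Finset.mem_image, Finset.mem_filter, Finset.mem_univ, true_and] at hv
      obtain ⟨j, _, rfl⟩ := hv
      simpa using j.isLt
    · intro x
      have hx : x ∈ ⋃ i, C i := by rw [hcover]; trivial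
      obtain ⟨i, hi⟩ := Set.mem_iUnion.1 hx
      refine ⟨(eqv i).val, Finset.mem_image.2 ⟨eqv i, ?_, rfl⟩⟩
      simp [eqv.symm_apply_apply, hi]
    · intro x
      rw [Finset.card_image_of_injective _ Fin.val_injective]
      have h1 : Finset.univ.filter (fun j : Fin n => x ∈ C (eqv.symm j)) =
          (Finset.univ.filter (fun i => x ∈ C i)).map eqv.toEmbedding := by
        ext j
        simp only [Finset.mem_filter, Finset.mem_univ, true_and, Finset.mem_map,
          Equiv.coe_toEmbedding]
        constructor
        · intro h; exact ⟨eqv.symm j, h, by simp⟩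
        · rintro ⟨i, hi, rfl⟩; simpa using hi
      rw [h1, Finset.card_map]
      have h2 : (Finset.univ.filter (fun i => x ∈ C i)).card
          = Set.ncard {i | x ∈ C i} := by
        rw [Set.ncard_eq_toFinset_card']
        congr 1
        simp [Set.toFinset_setOf]
      rw [h2]; exact hcard x
    · intro x y hxy
      obtain ⟨i, hi⟩ := hball x trivial
      have hx : x ∈ C i := hi (Metric.mem_ball_self hδ0)
      have hy : y ∈ C i := hi (by
        rw [Metric.mem_ball, dist_comm]
        exact lt_of_lt_of_le hxy (min_le_left _ _))
      refine ⟨(eqv i).val, Finset.mem_inter.2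
        ⟨Finset.mem_image.2 ⟨eqv i, ?_, rfl⟩, Finset.mem_image.2 ⟨eqv i, ?_, rfl⟩⟩⟩ <;>
        simp [eqv.symm_apply_apply, hx, hy]
    · intro x y hxy
      obtain ⟨v, hv⟩ := hxy
      rw [Finset.mem_inter] at hv
      obtain ⟨hvx, hvy⟩ := hv
      simp only [Finset.mem_image, Finset.mem_filter, Finset.mem_univ, true_and] at hvx hvy
      obtain ⟨j1, hj1, hj1v⟩ := hvx
      obtain ⟨j2, hj2, hj2v⟩ := hvy
      have : j1 = j2 := Fin.val_injective (hj1v.trans hj2v.symm)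
      subst this
      have hb : Bornology.IsBounded (C (eqv.symm j1)) :=
        isCompact_univ.isBounded.subset (Set.subset_univ _)
      have := Metric.dist_le_diam_of_mem hb hj1 hj2
      have := hdiam (eqv.symm j1)
      linarith
    · intro v hv
      have hvn : v < n := Finset.mem_range.1 hv
      have : {x : X | v ∈ (Finset.univ.filter
          (fun j : Fin n => x ∈ C (eqv.symm j))).image Fin.val}
          = C (eqv.symm ⟨v, hvn⟩) := by
        ext x
        simp only [Set.mem_setOf_eq, Finset.mem_image, Finset.mem_filter, Finset.mem_univ,
          true_and]
        constructor
        · rintro ⟨j, hj, rfl⟩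
          convert hj
        · intro h; exact ⟨⟨v, hvn⟩, h, rfl⟩
      rw [this]
      exact hopen _
  · intro hb ε hε
    obtain ⟨δ, hδ, hδε, Vset, e, hsub, hne, hcard, hclose, hfar, hopen⟩ := hb ε hε
    refine ⟨{v // v ∈ Vset}, inferInstance, fun v => {x | v.1 ∈ e x},
      fun v => hopen v.1 v.2, ?_, ?_, ?_⟩
    · ext x
      simp only [Set.mem_iUnion, Set.mem_setOf_eq, Set.mem_univ, iff_true]
      obtain ⟨v, hv⟩ := hne x
      exact ⟨⟨v, hsub x hv⟩, hv⟩
    · intro v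
      apply Metric.diam_le_of_forall_dist_le hε.le
      intro x hx y hy
      exact (hfar x y ⟨v.1, Finset.mem_inter.2 ⟨hx, hy⟩⟩).le
    · intro x
      calc Set.ncard {i : {v // v ∈ Vset} | x ∈ {x | i.1 ∈ e x}}
          = (Subtype.val '' {i : {v // v ∈ Vset} | x ∈ {x | i.1 ∈ e x}}).ncard :=
            (Set.ncard_image_of_injective _ Subtype.val_injective).symm
        _ ≤ ((e x : Set ℕ)).ncard := by
            apply Set.ncard_le_ncard _ (e x).finite_toSet
            rintro v ⟨i, hi, rfl⟩
            exact hi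
        _ = (e x).card := by simp [Set.ncard_coe_finset]
        _ ≤ k := hcard x
end

section
/- Let G be a finite simple graph admitting an embedding into a d-dimensional space, and let (η, 𝓡) be a minimal pair consisting of an embedding η of G and a rectangle co-cover 𝓡 = {R¹,…,Rᵐ} of η, where Rⁱ = R(J¹ᵢ,…,J^i_d) (that is, the total volume of 𝓡 equals the d-volume vol^d(G)). Then for all distinct i, j ∈ {1,…,m} and every coordinate k ∈ {1,…,d}, the sets J^i_k and J^j_k are disjoint. -/
/-- An embedding of a finite simple graph `G` into a `d`-dimensional space: an injective
map `η` from the vertices to `d`-tuples of natural numbers such that two vertices are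
adjacent iff their images differ in every coordinate. -/
def IsSpaceEmbedding {V : Type*} (G : SimpleGraph V) (d : ℕ) (η : V → Fin d → ℕ) : Prop :=
  Function.Injective η ∧ ∀ u v : V, G.Adj u v ↔ ∀ k, η u k ≠ η v k

/-- The hyper-rectangle `R(J₁,…,J_d)`: the set of `d`-tuples whose `k`-th coordinate lies
in `J k`. -/
def rect {d : ℕ} (J : Fin d → Finset ℕ) : Set (Fin d → ℕ) := {x | ∀ k, x k ∈ J k}

/-- The volume `|J₁|⋯|J_d|` of the hyper-rectangle `R(J₁,…,J_d)`. -/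
def rvol {d : ℕ} (J : Fin d → Finset ℕ) : ℕ := ∏ k, (J k).card

/-- A rectangle co-cover of an embedding `η` of `G`: a finite family of pairwise disjoint
hyper-rectangles (with all sides nonempty) whose union contains `η(V(G))` and such that
every pair of distinct non-adjacent vertices has both images in a common hyper-rectangle. -/
def IsRectCoCover {V : Type*} (G : SimpleGraph V) {d m : ℕ}
    (η : V → Fin d → ℕ) (R : Fin m → Fin d → Finset ℕ) : Prop :=
  (∀ i k, (R i k).Nonempty) ∧
  (∀ i j : Fin m, i ≠ j → Disjoint (rect (R i)) (rect (R j))) ∧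
  (∀ v : V, ∃ i, η v ∈ rect (R i)) ∧
  (∀ u v : V, u ≠ v → ¬ G.Adj u v → ∃ i, η u ∈ rect (R i) ∧ η v ∈ rect (R i))

/-- The `d`-volume `vol^d(G)`: the minimum over all embeddings of `G` into a
`d`-dimensional space and all rectangle co-covers of the embedding of the total volume
of the co-cover. -/
noncomputable def dVol {V : Type*} (G : SimpleGraph V) (d : ℕ) : ℕ :=
  sInf {s | ∃ η : V → Fin d → ℕ, IsSpaceEmbedding G d η ∧
    ∃ (m : ℕ) (R : Fin m → Fin d → Finset ℕ),
      IsRectCoCover G η R ∧ s = ∑ i, rvol (R i)}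

lemma rect_mono {d : ℕ} {J J' : Fin d → Finset ℕ} (h : ∀ k, J k ⊆ J' k) :
    rect J ⊆ rect J' := fun x hx k => h k (hx k)

lemma rvol_pos {d m : ℕ} {R : Fin m → Fin d → Finset ℕ}
    (h : ∀ i k, (R i k).Nonempty) (j : Fin m) : 0 < rvol (R j) :=
  Finset.prod_pos fun k _ => Finset.card_pos.mpr (h j k)

/-- If some side value `a` of rectangle `j` is not used (at coordinate `k`) by any vertex
lying in rectangle `j`, then the co-cover can be strictly shrunk. -/
lemma exists_smaller_cocover {V : Type*} (G : SimpleGraph V) {d m : ℕ}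
    (η : V → Fin d → ℕ) (R : Fin m → Fin d → Finset ℕ) (hR : IsRectCoCover G η R)
    (j : Fin m) (k : Fin d) (a : ℕ) (haj : a ∈ R j k)
    (hP : ∀ v, η v ∈ rect (R j) → η v k ≠ a) :
    ∃ (m' : ℕ) (R' : Fin m' → Fin d → Finset ℕ),
      IsRectCoCover G η R' ∧ ∑ t, rvol (R' t) < ∑ t, rvol (R t) := by
  obtain ⟨hne, hdisj, hcov, hpair⟩ := hR
  by_cases hb : ∃ b ∈ R j k, b ≠ a
  · -- erase `a` from the `k`-th side of rectangle `j`
    obtain ⟨b, hbmem, hba⟩ := hb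
    set Rj' : Fin d → Finset ℕ := Function.update (R j) k ((R j k).erase a) with hRj'
    set R' : Fin m → Fin d → Finset ℕ := Function.update R j Rj' with hR'
    have hsub : ∀ l k', R' l k' ⊆ R l k' := by
      intro l k'
      rcases eq_or_ne l j with rfl | hl
      · rcases eq_or_ne k' k with rfl | hk'
        · simp only [R', Rj', Function.update_self]
          exact Finset.erase_subset _ _
        · simp [R', Rj', Function.update_of_ne hk']
      · simp [R', Function.update_of_ne hl]
    have hmemR' : ∀ l (x : Fin d → ℕ), x ∈ rect (R l) → (l = j → x k ≠ a) →
        x ∈ rect (R' l) := by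
      intro l x hx hxa k'
      rcases eq_or_ne l j with rfl | hl
      · rcases eq_or_ne k' k with rfl | hk'
        · simp only [R', Rj', Function.update_self, Finset.mem_erase]
          exact ⟨hxa rfl, hx k'⟩
        · simpa [R', Rj', Function.update_of_ne hk'] using hx k'
      · simpa [R', Function.update_of_ne hl] using hx k'
    refine ⟨m, R', ⟨?_, ?_, ?_, ?_⟩, ?_⟩
    · intro l k'
      rcases eq_or_ne l j with rfl | hl
      · rcases eq_or_ne k' k with rfl | hk'
        · refine ⟨b, ?_⟩
          simp only [R', Rj', Function.update_self]
          exact Finset.mem_erase.mpr ⟨hba, hbmem⟩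
        · have : R' l k' = R l k' := by
            simp [R', Rj', Function.update_self, Function.update_of_ne hk']
          rw [this]; exact hne l k'
      · have : R' l k' = R l k' := by simp [R', Function.update_of_ne hl]
        rw [this]; exact hne l k'
    · intro l l' hll'
      exact (hdisj l l' hll').mono (rect_mono (hsub l)) (rect_mono (hsub l'))
    · intro v
      obtain ⟨l, hl⟩ := hcov v
      exact ⟨l, hmemR' l _ hl (fun h => hP v (h ▸ hl))⟩
    · intro u v huv hadj
      obtain ⟨l, hul, hvl⟩ := hpair u v huv hadj
      exact ⟨l, hmemR' l _ hul (fun h => hP u (h ▸ hul)),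
        hmemR' l _ hvl (fun h => hP v (h ▸ hvl))⟩
    · -- the total volume strictly decreased
      apply Finset.sum_lt_sum
      · intro l _
        exact Finset.prod_le_prod' fun k' _ => Finset.card_le_card (hsub l k')
      · refine ⟨j, Finset.mem_univ j, ?_⟩
        have h1 : rvol (R' j) = ((R j k).erase a).card *
            ∏ k' ∈ Finset.univ.erase k, (R' j k').card := by
          rw [rvol, ← Finset.mul_prod_erase Finset.univ _ (Finset.mem_univ k)]
          simp [R', Rj']
        have h2 : rvol (R j) = (R j k).card *
            ∏ k' ∈ Finset.univ.erase k, (R j k').card := by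
          rw [rvol, ← Finset.mul_prod_erase Finset.univ _ (Finset.mem_univ k)]
        have h3 : ∀ k' ∈ Finset.univ.erase k, (R' j k').card = (R j k').card := by
          intro k' hk'
          have : k' ≠ k := (Finset.mem_erase.mp hk').1
          simp [R', Rj', Function.update_of_ne this]
        rw [h1, h2, Finset.prod_congr rfl h3]
        apply mul_lt_mul_of_pos_right (Finset.card_erase_lt_of_mem haj)
        exact Finset.prod_pos fun k' _ => Finset.card_pos.mpr (hne j k')
  · -- here `R j k = {a}`, so rectangle `j` contains no vertex: drop it
    push_neg at hb
    have hnov : ∀ v, η v ∉ rect (R j) := fun v hv => hP v hv (hb _ (hv k))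
    cases m with
    | zero => exact j.elim0
    | succ n =>
      refine ⟨n, fun t => R (j.succAbove t), ⟨?_, ?_, ?_, ?_⟩, ?_⟩
      · intro t k'; exact hne _ k'
      · intro t t' htt'
        exact hdisj _ _ fun h => htt' (Fin.succAbove_right_injective h)
      · intro v
        obtain ⟨l, hl⟩ := hcov v
        have hlj : l ≠ j := fun h => hnov v (h ▸ hl)
        obtain ⟨t, ht⟩ := Fin.exists_succAbove_eq hlj
        refine ⟨t, ?_⟩
        show η v ∈ rect (R (j.succAbove t))
        rw [ht]; exact hl
      · intro u v huv hadj
        obtain ⟨l, hul, hvl⟩ := hpair u v huv hadj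
        have hlj : l ≠ j := fun h => hnov u (h ▸ hul)
        obtain ⟨t, ht⟩ := Fin.exists_succAbove_eq hlj
        refine ⟨t, ?_, ?_⟩ <;>
          first
          | (show η u ∈ rect (R (j.succAbove t)); rw [ht]; exact hul)
          | (show η v ∈ rect (R (j.succAbove t)); rw [ht]; exact hvl)
      · rw [Fin.sum_univ_succAbove (fun l => rvol (R l)) j]
        exact Nat.lt_add_of_pos_left (rvol_pos hne j)

/-- If `(η, R)` is a minimal pair (an embedding of `G` together with a
rectangle co-cover whose total volume equals `vol^d(G)`), then the `k`-th sides of any two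
distinct hyper-rectangles of the co-cover are disjoint. -/
theorem minimal_cocover_sides_disjoint {V : Type*} [Fintype V]
    (G : SimpleGraph V) (d : ℕ) (hd : 0 < d)
    (η : V → Fin d → ℕ) (hη : IsSpaceEmbedding G d η)
    (m : ℕ) (R : Fin m → Fin d → Finset ℕ) (hR : IsRectCoCover G η R)
    (hmin : ∑ i, rvol (R i) = dVol G d) :
    ∀ i j : Fin m, i ≠ j → ∀ k : Fin d, Disjoint (R i k) (R j k) := by
  intro i j hij k
  by_contra hnd
  obtain ⟨a, hai, haj⟩ := Finset.not_disjoint_iff.mp hnd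
  -- helper: a strictly smaller co-cover contradicts minimality
  have key : ∀ (j' : Fin m), a ∈ R j' k →
      (∀ v, η v ∈ rect (R j') → η v k ≠ a) → False := by
    intro j' ha hP
    obtain ⟨m', R', hcov', hlt⟩ := exists_smaller_cocover G η R hR j' k a ha hP
    have hmem : (∑ t, rvol (R' t)) ∈ {s | ∃ η : V → Fin d → ℕ, IsSpaceEmbedding G d η ∧
        ∃ (m : ℕ) (R : Fin m → Fin d → Finset ℕ),
          IsRectCoCover G η R ∧ s = ∑ i, rvol (R i)} :=
      ⟨η, hη, m', R', hcov', rfl⟩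
    have hle : dVol G d ≤ ∑ t, rvol (R' t) := Nat.sInf_le hmem
    omega
  by_cases hPj : ∃ v, η v ∈ rect (R j) ∧ η v k = a
  · by_cases hPi : ∃ u, η u ∈ rect (R i) ∧ η u k = a
    · -- both sides use `a`: direct contradiction with the embedding property
      obtain ⟨u, hui, huk⟩ := hPi
      obtain ⟨v, hvj, hvk⟩ := hPj
      have huv : u ≠ v := by
        rintro rfl
        exact Set.disjoint_left.mp (hR.2.1 i j hij) hui hvj
      have hadj : ¬ G.Adj u v := fun h => hη.2 u v |>.mp h k (huk.trans hvk.symm)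
      obtain ⟨l, hul, hvl⟩ := hR.2.2.2 u v huv hadj
      have hli : l = i := by
        by_contra h
        exact Set.disjoint_left.mp (hR.2.1 l i h) hul hui
      have hlj : l = j := by
        by_contra h
        exact Set.disjoint_left.mp (hR.2.1 l j h) hvl hvj
      exact hij (hli ▸ hlj)
    · push_neg at hPi
      exact key i hai fun v hv hva => hPi v hv hva
  · push_neg at hPj
    exact key j haj fun v hv hva => hPj v hv hva
end

section
/- Let G be a finite simple graph admitting an embedding into a d-dimensional space, and let (η, 𝓡) be a minimal pair consisting of an embedding η of G and a rectangle co-cover 𝓡 = {R¹,…,Rᵐ} of η (that is, the total volume of 𝓡 equals the d-volume vol^d(G)). Let C¹,…,Cᵐ be the co-connected components of G, indexed so that η(Cⁱ) ⊆ Rⁱ for each i. Then each Rⁱ is the minimal hyper-rectangle containing η(Cⁱ); that is, Rⁱ = R(P₁(η(Cⁱ)),…,P_d(η(Cⁱ))), where P_k(W) denotes the set of k-th coordinates of elements of W. -/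
/-- Let `(η, R)` be a minimal pair (an embedding of `G` together with a
rectangle co-cover whose total volume equals `vol^d(G)`), and let `C¹,…,Cᵐ` be the
co-connected components of `G`, indexed so that `η(Cⁱ) ⊆ Rⁱ` for each `i`. Then each `Rⁱ`
is the minimal hyper-rectangle containing `η(Cⁱ)`: its `k`-th side equals the `k`-th
projection `P_k(η(Cⁱ))` for every coordinate `k`. -/
theorem minimal_cocover_rect_eq_projections {V : Type*} [Fintype V]
    (G : SimpleGraph V) (d : ℕ) (hd : 0 < d)
    (η : V → Fin d → ℕ) (hη : IsSpaceEmbedding G d η)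
    (m : ℕ) (R : Fin m → Fin d → Finset ℕ) (hR : IsRectCoCover G η R)
    (hmin : ∑ i, rvol (R i) = dVol G d)
    (C : Fin m → Set V)
    (hC1 : ∀ i, ∃ c : Gᶜ.ConnectedComponent, C i = c.supp)
    (hC2 : ∀ c : Gᶜ.ConnectedComponent, ∃ i, C i = c.supp)
    (hCR : ∀ i, ∀ v ∈ C i, η v ∈ rect (R i)) :
    ∀ (i : Fin m) (k : Fin d), (R i k : Set ℕ) = (fun v => η v k) '' C i := by
  classical
  -- the shrunk rectangles
  set F : Fin m → Fin d → Finset ℕ :=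
    fun i k => (Set.toFinite ((fun v => η v k) '' C i)).toFinset with hF
  have hmemF : ∀ i k x, x ∈ F i k ↔ x ∈ (fun v => η v k) '' C i := by
    intro i k x; simp [hF, Set.Finite.mem_toFinset]
  -- each C i is nonempty
  have hCne : ∀ i, (C i).Nonempty := by
    intro i
    obtain ⟨c, hc⟩ := hC1 i
    obtain ⟨v, hv⟩ := c.exists_rep
    exact ⟨v, by rw [hc]; exact hv ▸ rfl⟩
  -- F i k ⊆ R i k
  have hsub : ∀ i k, F i k ⊆ R i k := by
    intro i k x hx
    rw [hmemF] at hx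
    obtain ⟨v, hv, rfl⟩ := hx
    exact hCR i v hv k
  have hFne : ∀ i k, (F i k).Nonempty := by
    intro i k
    obtain ⟨v, hv⟩ := hCne i
    exact ⟨η v k, (hmemF i k _).2 ⟨v, hv, rfl⟩⟩
  -- every vertex lies in some C i
  have hvC : ∀ v : V, ∃ i, v ∈ C i := by
    intro v
    obtain ⟨i, hi⟩ := hC2 (Gᶜ.connectedComponentMk v)
    exact ⟨i, by rw [hi]; exact rfl⟩
  -- non-adjacent distinct vertices lie in a common C i
  have hpair : ∀ u v : V, u ≠ v → ¬ G.Adj u v → ∃ i, u ∈ C i ∧ v ∈ C i := by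
    intro u v huv hnadj
    have hadj : Gᶜ.Adj u v := by rw [SimpleGraph.compl_adj]; exact ⟨huv, hnadj⟩
    obtain ⟨i, hi⟩ := hC2 (Gᶜ.connectedComponentMk u)
    refine ⟨i, by rw [hi]; exact rfl, ?_⟩
    rw [hi]
    exact (SimpleGraph.ConnectedComponent.mem_supp_iff _ _).2
      (SimpleGraph.ConnectedComponent.sound hadj.symm.reachable)
  have hmemrectF : ∀ i v, v ∈ C i → η v ∈ rect (F i) := by
    intro i v hv k
    exact (hmemF i k _).2 ⟨v, hv, rfl⟩
  -- rect F ⊆ rect R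
  have hrectsub : ∀ i, rect (F i) ⊆ rect (R i) := by
    intro i x hx k
    exact hsub i k (hx k)
  -- F is a rectangle co-cover
  have hFcover : IsRectCoCover G η F := by
    refine ⟨hFne, ?_, ?_, ?_⟩
    · intro i j hij
      exact (hR.2.1 i j hij).mono (hrectsub i) (hrectsub j)
    · intro v
      obtain ⟨i, hi⟩ := hvC v
      exact ⟨i, hmemrectF i v hi⟩
    · intro u v huv hnadj
      obtain ⟨i, hu, hv⟩ := hpair u v huv hnadj
      exact ⟨i, hmemrectF i u hu, hmemrectF i v hv⟩
  -- termwise volume inequality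
  have hvolle : ∀ i, rvol (F i) ≤ rvol (R i) := by
    intro i
    exact Finset.prod_le_prod (fun k _ => Nat.zero_le _)
      (fun k _ => Finset.card_le_card (hsub i k))
  -- total volume of F is at least dVol
  have hdle : dVol G d ≤ ∑ i, rvol (F i) := by
    apply Nat.sInf_le
    exact ⟨η, hη, m, F, hFcover, rfl⟩
  have hsumle : ∑ i, rvol (F i) ≤ ∑ i, rvol (R i) :=
    Finset.sum_le_sum (fun i _ => hvolle i)
  have hsumeq : ∑ i, rvol (F i) = ∑ i, rvol (R i) :=
    le_antisymm hsumle (hmin ▸ hdle)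
  have hvoleq : ∀ i, rvol (F i) = rvol (R i) := by
    have := (Finset.sum_eq_sum_iff_of_le (fun i _ => hvolle i)).1 hsumeq
    exact fun i => this i (Finset.mem_univ i)
  -- from equal volumes and termwise card ≤, deduce equal cards
  have hcardeq : ∀ i k, (F i k).card = (R i k).card := by
    intro i k
    by_contra hne
    have hlt : (F i k).card < (R i k).card :=
      lt_of_le_of_ne (Finset.card_le_card (hsub i k)) hne
    have : rvol (F i) < rvol (R i) := by
      apply Finset.prod_lt_prod (f := fun k => (F i k).card)
        (g := fun k => (R i k).card)
      · exact fun k _ => Finset.card_pos.2 (hFne i k)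
      · exact fun k _ => Finset.card_le_card (hsub i k)
      · exact ⟨k, Finset.mem_univ k, hlt⟩
    exact absurd (hvoleq i) (Nat.ne_of_lt this)
  have hfinseteq : ∀ i k, F i k = R i k := by
    intro i k
    exact Finset.eq_of_subset_of_card_le (hsub i k) (le_of_eq (hcardeq i k).symm)
  intro i k
  rw [← hfinseteq i k]
  ext x
  simp [hmemF]
end

section
/- Let G be a finite simple graph whose complement is connected and which admits an embedding into a d-dimensional space. Then the d-volume vol^d(G) equals the minimum of p₁·p₂·⋯·p_d taken over all positive integers p₁,…,p_d for which there exists an injective map η from V(G) to ∏ᵢ{1,…,pᵢ} such that u and v are adjacent in G if and only if η(u) and η(v) differ in every coordinate; that is, vol^d(G) is the minimal number of vertices of a categorical product of d complete graphs containing G as an induced subgraph. -/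
lemma countLt_lt {J : Finset ℕ} {x y : ℕ} (hx : x ∈ J) (hxy : x < y) :
    (J.filter (· < x)).card < (J.filter (· < y)).card := by
  apply Finset.card_lt_card
  rw [Finset.ssubset_def]
  constructor
  · intro z hz
    simp only [Finset.mem_filter] at hz ⊢
    exact ⟨hz.1, hz.2.trans hxy⟩
  · intro h
    have := h (Finset.mem_filter.mpr ⟨hx, hxy⟩)
    simp only [Finset.mem_filter] at this
    exact absurd this.2 (lt_irrefl x)

lemma countLt_eq_iff {J : Finset ℕ} {x y : ℕ} (hx : x ∈ J) (hy : y ∈ J) :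
    (J.filter (· < x)).card = (J.filter (· < y)).card ↔ x = y := by
  constructor
  · intro h
    rcases lt_trichotomy x y with h' | h' | h'
    · exact absurd h (Nat.ne_of_lt (countLt_lt hx h'))
    · exact h'
    · exact absurd h.symm (Nat.ne_of_lt (countLt_lt hy h'))
  · rintro rfl; rfl

lemma countLt_lt_card {J : Finset ℕ} {x : ℕ} (hx : x ∈ J) :
    (J.filter (· < x)).card < J.card := by
  apply Finset.card_lt_card
  rw [Finset.ssubset_def]
  refine ⟨Finset.filter_subset _ _, fun h => ?_⟩
  have := h hx
  simp only [Finset.mem_filter] at this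
  exact absurd this.2 (lt_irrefl x)

/-- If the complement of `G` is connected and `G` admits an embedding
into a `d`-dimensional space, then `vol^d(G)` equals the minimum of `p₁⋯p_d` over all
positive integers `p₁,…,p_d` such that `G` embeds into `∏ᵢ {1,…,pᵢ}` (i.e. the minimal
number of vertices of a categorical product of `d` complete graphs containing `G` as an
induced subgraph). -/
theorem dVol_eq_min_space_volume_of_compl_connected {V : Type*} [Fintype V]
    (G : SimpleGraph V) (d : ℕ) (hd : 0 < d)
    (hconn : Gᶜ.Connected)
    (hemb : ∃ η : V → Fin d → ℕ, IsSpaceEmbedding G d η) :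
    dVol G d = sInf {s | ∃ p : Fin d → ℕ, (∀ k, 0 < p k) ∧
      (∃ η : V → Fin d → ℕ, IsSpaceEmbedding G d η ∧ ∀ (v : V) (k : Fin d), η v k < p k) ∧
      s = ∏ k, p k} := by
  classical
  set A : Set ℕ := {s | ∃ η : V → Fin d → ℕ, IsSpaceEmbedding G d η ∧
    ∃ (m : ℕ) (R : Fin m → Fin d → Finset ℕ),
      IsRectCoCover G η R ∧ s = ∑ i, rvol (R i)} with hA
  set B : Set ℕ := {s | ∃ p : Fin d → ℕ, (∀ k, 0 < p k) ∧
      (∃ η : V → Fin d → ℕ, IsSpaceEmbedding G d η ∧ ∀ (v : V) (k : Fin d), η v k < p k) ∧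
      s = ∏ k, p k} with hB
  have hV : Nonempty V := hconn.nonempty
  -- B ⊆ A : a bounded embedding yields a single-rectangle co-cover
  have hBA : B ⊆ A := by
    rintro s ⟨p, hp, ⟨η, hη, hbd⟩, rfl⟩
    refine ⟨η, hη, 1, fun _ k => Finset.range (p k), ⟨?_, ?_, ?_, ?_⟩, ?_⟩
    · intro i k
      rw [Finset.nonempty_range_iff]
      exact (hp k).ne'
    · intro i j hij
      exact absurd (Subsingleton.elim i j) hij
    · intro v
      exact ⟨0, fun k => Finset.mem_range.mpr (hbd v k)⟩
    · intro u v _ _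
      exact ⟨0, fun k => Finset.mem_range.mpr (hbd u k),
        fun k => Finset.mem_range.mpr (hbd v k)⟩
    · simp [rvol, Finset.card_range]
  -- From any element of A, produce a smaller element of B (using connectedness of Gᶜ)
  have hAB : ∀ s ∈ A, ∃ t ∈ B, t ≤ s := by
    rintro s ⟨η, hη, m, R, hcov, rfl⟩
    obtain ⟨hne, hdisj, hcover, hpairs⟩ := hcov
    obtain ⟨v0⟩ := hV
    obtain ⟨i0, hi0⟩ := hcover v0
    -- all vertices lie in rectangle i0
    have hall : ∀ v : V, η v ∈ rect (R i0) := by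
      have step : ∀ (a b : V), Gᶜ.Walk a b → η a ∈ rect (R i0) → η b ∈ rect (R i0) := by
        intro a b w
        induction w with
        | nil => exact id
        | cons h p ih =>
          intro ha
          apply ih
          rw [SimpleGraph.compl_adj] at h
          obtain ⟨j, hju, hjv⟩ := hpairs _ _ h.1 h.2
          by_cases hij : j = i0
          · subst hij; exact hjv
          · exact absurd ha (Set.disjoint_left.mp (hdisj j i0 hij) hju)
      intro v
      obtain ⟨w⟩ := (hconn.preconnected v0 v)
      exact step v0 v w hi0
    -- compress coordinates
    set p : Fin d → ℕ := fun k => (R i0 k).card with hp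
    set η' : V → Fin d → ℕ := fun v k => ((R i0 k).filter (· < η v k)).card with hη'
    have hcoord : ∀ u v k, η' u k = η' v k ↔ η u k = η v k := by
      intro u v k
      exact countLt_eq_iff (hall u k) (hall v k)
    refine ⟨∏ k, p k, ⟨p, ?_, ⟨η', ⟨?_, ?_⟩, ?_⟩, rfl⟩, ?_⟩
    · intro k
      exact Finset.card_pos.mpr (hne i0 k)
    · intro u v h
      apply hη.1
      funext k
      exact (hcoord u v k).mp (congrFun h k)
    · intro u v
      rw [hη.2 u v]
      constructor
      · intro h k hk
        exact h k ((hcoord u v k).mp hk)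
      · intro h k hk
        exact h k ((hcoord u v k).mpr hk)
    · intro v k
      exact countLt_lt_card (hall v k)
    · calc ∏ k, p k = rvol (R i0) := rfl
        _ ≤ ∑ i, rvol (R i) :=
          Finset.single_le_sum (f := fun i => rvol (R i)) (fun i _ => Nat.zero_le _) (Finset.mem_univ i0)
  -- A is nonempty
  have hAne : A.Nonempty := by
    obtain ⟨η, hη⟩ := hemb
    refine ⟨∑ i : Fin 1, rvol ((fun (_ : Fin 1) k => Finset.image (fun v => η v k) Finset.univ) i),
      η, hη, 1, _, ⟨?_, ?_, ?_, ?_⟩, rfl⟩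
    · intro i k
      exact (Finset.univ_nonempty).image _
    · intro i j hij
      exact absurd (Subsingleton.elim i j) hij
    · intro v
      exact ⟨0, fun k => Finset.mem_image_of_mem _ (Finset.mem_univ v)⟩
    · intro u v _ _
      exact ⟨0, fun k => Finset.mem_image_of_mem _ (Finset.mem_univ u),
        fun k => Finset.mem_image_of_mem _ (Finset.mem_univ v)⟩
  -- conclude
  show sInf A = sInf B
  obtain ⟨t, htB, htle⟩ := hAB _ (Nat.sInf_mem hAne)
  have h1 : sInf B ≤ sInf A := le_trans (Nat.sInf_le htB) htle
  have h2 : sInf A ≤ sInf B := Nat.sInf_le (hBA (Nat.sInf_mem ⟨t, htB⟩))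
  exact le_antisymm h2 h1
end

section
/- Let G be a finite simple graph admitting an embedding into a d-dimensional space, and let D¹,…,Dᵐ be the co-connected components of G, i.e., the vertex sets of the connected components of the complement of G. Then vol^d(G) = Σᵢ₌₁ᵐ vol^d(G[Dⁱ]), where G[Dⁱ] is the subgraph of G induced by Dⁱ. -/
open Finset

lemma mem_rect {d : ℕ} {J : Fin d → Finset ℕ} {x : Fin d → ℕ} :
    x ∈ rect J ↔ ∀ k, x k ∈ J k := Iff.rfl

lemma card_piFinset_rvol {d : ℕ} (J : Fin d → Finset ℕ) :
    (Fintype.piFinset J).card = rvol J := by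
  rw [Fintype.card_piFinset]; rfl

lemma cocover_exists {V : Type*} [Fintype V] {G : SimpleGraph V} {d : ℕ}
    (η : V → Fin d → ℕ) :
    ∃ (mm : ℕ) (R : Fin mm → Fin d → Finset ℕ), IsRectCoCover G η R := by
  classical
  refine ⟨1, fun _ k => insert 0 (Finset.univ.image fun v => η v k), ?_, ?_, ?_, ?_⟩
  · exact fun i k => ⟨0, Finset.mem_insert_self _ _⟩
  · intro i j hij; exact absurd (Subsingleton.elim i j) hij
  · intro v
    exact ⟨0, fun k => Finset.mem_insert_of_mem (Finset.mem_image_of_mem _ (Finset.mem_univ v))⟩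
  · intro u v _ _
    exact ⟨0, fun k => Finset.mem_insert_of_mem (mem_image_of_mem _ (mem_univ u)),
             fun k => Finset.mem_insert_of_mem (mem_image_of_mem _ (mem_univ v))⟩

lemma dVol_mem {V : Type*} [Fintype V] {G : SimpleGraph V} {d : ℕ}
    (hemb : ∃ η : V → Fin d → ℕ, IsSpaceEmbedding G d η) :
    ∃ η : V → Fin d → ℕ, IsSpaceEmbedding G d η ∧
      ∃ (mm : ℕ) (R : Fin mm → Fin d → Finset ℕ),
        IsRectCoCover G η R ∧ dVol G d = ∑ i, rvol (R i) := by
  obtain ⟨η, hη⟩ := hemb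
  obtain ⟨mm, R, hR⟩ := cocover_exists (G := G) η
  have hne : ({s | ∃ η : V → Fin d → ℕ, IsSpaceEmbedding G d η ∧
      ∃ (mm : ℕ) (R : Fin mm → Fin d → Finset ℕ),
        IsRectCoCover G η R ∧ s = ∑ i, rvol (R i)}).Nonempty :=
    ⟨_, η, hη, mm, R, hR, rfl⟩
  exact Nat.sInf_mem hne

lemma dVol_le {V : Type*} [Fintype V] {G : SimpleGraph V} {d mm : ℕ}
    {η : V → Fin d → ℕ} (hη : IsSpaceEmbedding G d η)
    {R : Fin mm → Fin d → Finset ℕ} (hR : IsRectCoCover G η R) :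
    dVol G d ≤ ∑ i, rvol (R i) :=
  Nat.sInf_le ⟨η, hη, mm, R, hR, rfl⟩

lemma block_eq {N a b i j : ℕ} (ha : a < N) (hb : b < N)
    (h : i * N + a = j * N + b) : i = j ∧ a = b := by
  have hN : 0 < N := lt_of_le_of_lt (Nat.zero_le a) ha
  have hi : i = j := by
    have h1 := congrArg (· / N) h
    simpa [mul_comm, Nat.mul_add_div hN, Nat.div_eq_of_lt ha, Nat.div_eq_of_lt hb] using h1
  subst hi
  exact ⟨rfl, Nat.add_left_cancel h⟩

lemma restrict_embedding {V : Type*} {G : SimpleGraph V} {d : ℕ}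
    {η : V → Fin d → ℕ} (hη : IsSpaceEmbedding G d η) (s : Set V) :
    IsSpaceEmbedding (G.induce s) d (fun v => η v.1) := by
  constructor
  · intro u v h; exact Subtype.ext (hη.1 h)
  · intro u v
    have := hη.2 u.1 v.1
    simpa using this

/-- If `G` admits an embedding into a `d`-dimensional space and
`D¹,…,Dᵐ` are the co-connected components of `G` (the vertex sets of the connected
components of the complement of `G`, listed without repetition), then
`vol^d(G) = Σᵢ vol^d(G[Dⁱ])`. -/
theorem dVol_eq_sum_coconnected_components {V : Type*} [Fintype V] [DecidableEq V]
    (G : SimpleGraph V) (d : ℕ) (hd : 0 < d)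
    (hemb : ∃ η : V → Fin d → ℕ, IsSpaceEmbedding G d η)
    (m : ℕ) (D : Fin m → Finset V)
    (hD1 : ∀ i, ∃ c : Gᶜ.ConnectedComponent, (D i : Set V) = c.supp)
    (hD2 : ∀ c : Gᶜ.ConnectedComponent, ∃! i, (D i : Set V) = c.supp) :
    dVol G d = ∑ i, dVol (G.induce (D i : Set V)) d := by
  classical
  -- basic facts about the components
  have hmemD : ∀ (i : Fin m) (c : Gᶜ.ConnectedComponent), (D i : Set V) = c.supp →
      ∀ v, v ∈ D i ↔ Gᶜ.connectedComponentMk v = c := by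
    intro i c hc v
    rw [← SimpleGraph.ConnectedComponent.mem_supp_iff, ← hc]
    exact Finset.mem_coe.symm
  have hcover : ∀ v : V, ∃ i, v ∈ D i := by
    intro v
    obtain ⟨i, hi, -⟩ := hD2 (Gᶜ.connectedComponentMk v)
    exact ⟨i, (hmemD i _ hi v).2 rfl⟩
  have hdisj : ∀ {i j : Fin m} {v : V}, v ∈ D i → v ∈ D j → i = j := by
    intro i j v hvi hvj
    obtain ⟨ci, hci⟩ := hD1 i
    obtain ⟨cj, hcj⟩ := hD1 j
    have h1 := (hmemD i ci hci v).1 hvi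
    have h2 := (hmemD j cj hcj v).1 hvj
    obtain ⟨k, -, hk⟩ := hD2 ci
    have e1 := hk i hci
    have e2 := hk j (show (↑(D j) : Set V) = ci.supp by rw [hcj, ← h2, h1])
    rw [e1, e2]
  have hcross : ∀ {i j : Fin m} {u v : V}, i ≠ j → u ∈ D i → v ∈ D j → G.Adj u v := by
    intro i j u v hij hu hv
    have hne : u ≠ v := fun h => hij (hdisj (h ▸ hu) hv)
    by_contra hadj
    have hca : Gᶜ.Adj u v := (SimpleGraph.compl_adj G u v).2 ⟨hne, hadj⟩
    obtain ⟨ci, hci⟩ := hD1 i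
    obtain ⟨cj, hcj⟩ := hD1 j
    have h1 := (hmemD i ci hci u).1 hu
    have h2 := (hmemD j cj hcj v).1 hv
    have hcc : ci = cj := by
      rw [← h1, ← h2]
      exact SimpleGraph.ConnectedComponent.sound hca.reachable
    exact hij (hdisj hu ((hmemD j cj hcj u).2 (by rw [h1, hcc])))
  have hsame : ∀ {i : Fin m} {u v : V}, u ≠ v → ¬ G.Adj u v → u ∈ D i → v ∈ D i := by
    intro i u v hne hadj hu
    have hca : Gᶜ.Adj u v := (SimpleGraph.compl_adj G u v).2 ⟨hne, hadj⟩
    obtain ⟨ci, hci⟩ := hD1 i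
    have h1 := (hmemD i ci hci u).1 hu
    exact (hmemD i ci hci v).2
      (by rw [← h1]; exact (SimpleGraph.ConnectedComponent.sound hca.reachable).symm)
  choose comp hcomp using hcover
  have hcompuniq : ∀ {i : Fin m} {v : V}, v ∈ D i → comp v = i :=
    fun hv => hdisj (hcomp _) hv
  obtain ⟨η₀, hη₀⟩ := hemb
  -- ==================== direction ≤ ====================
  have hle : dVol G d ≤ ∑ i, dVol (G.induce (D i : Set V)) d := by
    have Hw : ∀ i : Fin m, ∃ η : (↑(D i) : Set V) → Fin d → ℕ,
        IsSpaceEmbedding (G.induce (D i : Set V)) d η ∧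
        ∃ (mm : ℕ) (R : Fin mm → Fin d → Finset ℕ),
          IsRectCoCover (G.induce (D i : Set V)) η R ∧
          dVol (G.induce (D i : Set V)) d = ∑ t, rvol (R t) :=
      fun i => dVol_mem ⟨_, restrict_embedding hη₀ _⟩
    choose η' hη' m' R' hR' hval using Hw
    set N : ℕ := (Finset.univ.sup fun i : Fin m => Finset.univ.sup fun j : Fin (m' i) =>
      Finset.univ.sup fun k : Fin d => (R' i j k).sup id) + 1 with hNdef
    have hbound : ∀ (i : Fin m) (j : Fin (m' i)) (k : Fin d) {x : ℕ}, x ∈ R' i j k → x < N := by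
      intro i j k x hx
      have h1 : x ≤ (R' i j k).sup id := Finset.le_sup (f := id) hx
      have h2 : (R' i j k).sup id ≤ Finset.univ.sup fun k : Fin d => (R' i j k).sup id :=
        Finset.le_sup (f := fun k : Fin d => (R' i j k).sup id) (Finset.mem_univ k)
      have h3 : (Finset.univ.sup fun k : Fin d => (R' i j k).sup id) ≤
          Finset.univ.sup fun j : Fin (m' i) =>
            Finset.univ.sup fun k : Fin d => (R' i j k).sup id :=
        Finset.le_sup (f := fun j : Fin (m' i) =>
          Finset.univ.sup fun k : Fin d => (R' i j k).sup id) (Finset.mem_univ j)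
      have h4 : (Finset.univ.sup fun j : Fin (m' i) =>
          Finset.univ.sup fun k : Fin d => (R' i j k).sup id) ≤
          Finset.univ.sup fun i : Fin m => Finset.univ.sup fun j : Fin (m' i) =>
            Finset.univ.sup fun k : Fin d => (R' i j k).sup id :=
        Finset.le_sup (f := fun i : Fin m => Finset.univ.sup fun j : Fin (m' i) =>
          Finset.univ.sup fun k : Fin d => (R' i j k).sup id) (Finset.mem_univ i)
      omega
    have hηb : ∀ (i : Fin m) (v : (↑(D i) : Set V)) (k : Fin d), η' i v k < N := by
      intro i v k
      obtain ⟨j, hj⟩ := (hR' i).2.2.1 v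
      exact hbound i j k (hj k)
    set E : Fin m → V → Fin d → ℕ :=
      fun i v k => if h : v ∈ D i then η' i ⟨v, h⟩ k else 0 with hEdef
    have hE : ∀ (i : Fin m) (v : V) (h : v ∈ D i) (k : Fin d), E i v k = η' i ⟨v, h⟩ k := by
      intro i v h k; simp only [hEdef, dif_pos h]
    have hEb : ∀ (i : Fin m) (v : V) (k : Fin d), v ∈ D i → E i v k < N := by
      intro i v k h; rw [hE i v h k]; exact hηb i ⟨v, h⟩ k
    set Η : V → Fin d → ℕ := fun v k => (comp v : ℕ) * N + E (comp v) v k with hΗdef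
    have hΗemb : IsSpaceEmbedding G d Η := by
      constructor
      · intro u v h
        have hk0 := congrFun h ⟨0, hd⟩
        have hb := block_eq (hEb _ _ _ (hcomp u)) (hEb _ _ _ (hcomp v)) hk0
        have hcuv : comp u = comp v := Fin.val_injective hb.1
        have hvD : v ∈ D (comp u) := hcuv ▸ hcomp v
        have hEall : ∀ k, E (comp u) u k = E (comp u) v k := by
          intro k
          have hk := congrFun h k
          simp only [hΗdef, ← hcuv] at hk
          exact Nat.add_left_cancel hk
        have heq : η' (comp u) ⟨u, hcomp u⟩ = η' (comp u) ⟨v, hvD⟩ := by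
          funext k
          rw [← hE _ _ (hcomp u) k, ← hE _ _ hvD k]
          exact hEall k
        exact congrArg Subtype.val ((hη' (comp u)).1 heq)
      · intro u v
        by_cases hcuv : comp u = comp v
        · have hvD : v ∈ D (comp u) := hcuv ▸ hcomp v
          have hadj : G.Adj u v ↔ ∀ k, η' (comp u) ⟨u, hcomp u⟩ k ≠ η' (comp u) ⟨v, hvD⟩ k :=
            Iff.trans (Iff.rfl) ((hη' (comp u)).2 ⟨u, hcomp u⟩ ⟨v, hvD⟩)
          rw [hadj]
          refine forall_congr' fun k => ?_
          rw [← hE _ _ (hcomp u) k, ← hE _ _ hvD k]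
          simp only [hΗdef, ← hcuv, ne_eq, Nat.add_right_cancel_iff, Nat.add_left_cancel_iff]
        · refine iff_of_true (hcross hcuv (hcomp u) (hcomp v)) fun k h => ?_
          exact hcuv (Fin.val_injective
            (block_eq (hEb _ _ _ (hcomp u)) (hEb _ _ _ (hcomp v)) h).1)
    let e : (Σ i : Fin m, Fin (m' i)) ≃ Fin (∑ i, m' i) :=
      Fintype.equivFinOfCardEq (by simp)
    set S : (Σ i : Fin m, Fin (m' i)) → Fin d → Finset ℕ :=
      fun p k => (R' p.1 p.2 k).image (fun x => (p.1 : ℕ) * N + x) with hSdef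
    have hSdisj : ∀ p q : (Σ i : Fin m, Fin (m' i)), p ≠ q →
        Disjoint (rect (S p)) (rect (S q)) := by
      rintro ⟨i, j⟩ ⟨i', j'⟩ hpq
      rw [Set.disjoint_left]
      intro x hx hy
      choose a ha hax using fun k => Finset.mem_image.1 (hx k)
      choose b hb hbx using fun k => Finset.mem_image.1 (hy k)
      by_cases hii : i = i'
      · subst hii
        have hjj : j ≠ j' := fun h => hpq (by rw [h])
        have hab : a = b := funext fun k => Nat.add_left_cancel ((hax k).trans (hbx k).symm)
        refine Set.disjoint_left.1 ((hR' i).2.1 j j' hjj) (mem_rect.2 ha) (mem_rect.2 ?_)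
        rw [hab]; exact hb
      · have hblk := block_eq (hbound i j ⟨0, hd⟩ (ha ⟨0, hd⟩))
          (hbound i' j' ⟨0, hd⟩ (hb ⟨0, hd⟩)) ((hax ⟨0, hd⟩).trans (hbx ⟨0, hd⟩).symm)
        exact hii (Fin.val_injective hblk.1)
    set Rbig : Fin (∑ i, m' i) → Fin d → Finset ℕ := fun t => S (e.symm t) with hRbigdef
    have hRbigeq : ∀ p : Σ i : Fin m, Fin (m' i), Rbig (e p) = S p := fun p => by
      rw [hRbigdef]; exact congrArg S (e.symm_apply_apply p)
    have hΗcov : IsRectCoCover G Η Rbig := by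
      refine ⟨?_, ?_, ?_, ?_⟩
      · intro t k
        exact (((hR' (e.symm t).1).1 (e.symm t).2 k).image _)
      · intro t t' htt'
        exact hSdisj _ _ (fun h => htt' (e.symm.injective h))
      · intro v
        obtain ⟨j, hj⟩ := (hR' (comp v)).2.2.1 ⟨v, hcomp v⟩
        refine ⟨e ⟨comp v, j⟩, fun k => ?_⟩
        rw [hRbigeq ⟨comp v, j⟩]
        refine Finset.mem_image.2 ⟨η' (comp v) ⟨v, hcomp v⟩ k, hj k, ?_⟩
        simp only [hΗdef, hE _ _ (hcomp v) k]
      · intro u v hne hnadj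
        have hv : v ∈ D (comp u) := hsame hne hnadj (hcomp u)
        have hcv : comp v = comp u := hcompuniq hv
        have hne' : (⟨u, hcomp u⟩ : (↑(D (comp u)) : Set V)) ≠ ⟨v, hv⟩ :=
          fun h => hne (congrArg Subtype.val h)
        have hnadj' : ¬ (G.induce (D (comp u) : Set V)).Adj ⟨u, hcomp u⟩ ⟨v, hv⟩ := by
          simpa using hnadj
        obtain ⟨j, hju, hjv⟩ := (hR' (comp u)).2.2.2 _ _ hne' hnadj'
        refine ⟨e ⟨comp u, j⟩, fun k => ?_, fun k => ?_⟩
        · rw [hRbigeq ⟨comp u, j⟩]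
          refine Finset.mem_image.2 ⟨η' (comp u) ⟨u, hcomp u⟩ k, hju k, ?_⟩
          simp only [hΗdef, hE _ _ (hcomp u) k]
        · rw [hRbigeq ⟨comp u, j⟩]
          refine Finset.mem_image.2 ⟨η' (comp u) ⟨v, hv⟩ k, hjv k, ?_⟩
          simp only [hΗdef, hcv, hE _ _ hv k]
    calc dVol G d ≤ ∑ t, rvol (Rbig t) := dVol_le hΗemb hΗcov
      _ = ∑ p : Σ i : Fin m, Fin (m' i), rvol (S p) :=
          (Fintype.sum_equiv e.symm _ _ fun t => rfl)
      _ = ∑ i, ∑ j, rvol (S ⟨i, j⟩) := by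
          rw [← Finset.univ_sigma_univ, Finset.sum_sigma]
      _ = ∑ i, ∑ j, rvol (R' i j) := by
          refine Finset.sum_congr rfl fun i _ => Finset.sum_congr rfl fun j _ => ?_
          unfold rvol
          simp only [hSdef]
          refine Finset.prod_congr rfl fun k _ => ?_
          exact Finset.card_image_of_injective _ fun x y h => Nat.add_left_cancel h
      _ = ∑ i, dVol (G.induce (D i : Set V)) d :=
          Finset.sum_congr rfl fun i _ => (hval i).symm
  -- ==================== direction ≥ ====================
  have hge : ∑ i, dVol (G.induce (D i : Set V)) d ≤ dVol G d := by
    obtain ⟨η, hη, M, R, hR, hs⟩ := dVol_mem ⟨η₀, hη₀⟩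
    set Verts : Fin m → Fin M → Finset V :=
      fun i j => Finset.univ.filter (fun v => v ∈ D i ∧ η v ∈ rect (R j)) with hVdef
    set S2 : Fin m → Fin M → Fin d → Finset ℕ :=
      fun i j k => (Verts i j).image (fun v => η v k) with hS2def
    set Used : Fin m → Finset (Fin M) :=
      fun i => Finset.univ.filter (fun j => (Verts i j).Nonempty) with hUdef
    have hVmem : ∀ {i j v}, v ∈ Verts i j ↔ v ∈ D i ∧ η v ∈ rect (R j) := by
      intro i j v; simp [hVdef]
    have hS2sub : ∀ i j, rect (S2 i j) ⊆ rect (R j) := by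
      intro i j x hx k
      obtain ⟨v, hv, hvk⟩ := Finset.mem_image.1 (hx k)
      rw [← hvk]
      exact (hVmem.1 hv).2 k
    -- per-component co-cover bound
    have hcomp_le : ∀ i : Fin m,
        dVol (G.induce (D i : Set V)) d ≤ ∑ j ∈ Used i, rvol (S2 i j) := by
      intro i
      have hemb' := restrict_embedding hη (D i : Set V)
      set Ri : Fin (Used i).card → Fin d → Finset ℕ :=
        fun t => S2 i ((Used i).equivFin.symm t).1 with hRidef
      have hcov : IsRectCoCover (G.induce (D i : Set V)) (fun v => η v.1) Ri := by
        refine ⟨?_, ?_, ?_, ?_⟩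
        · intro t k
          have hj : (((Used i).equivFin.symm t) : Fin M) ∈ Used i := ((Used i).equivFin.symm t).2
          simp only [hUdef, Finset.mem_filter] at hj
          obtain ⟨v, hv⟩ := hj.2
          exact ⟨η v k, Finset.mem_image_of_mem _ hv⟩
        · intro t t' htt'
          have hjj : ((Used i).equivFin.symm t).1 ≠ ((Used i).equivFin.symm t').1 := by
            intro h
            exact htt' ((Used i).equivFin.symm.injective (Subtype.ext h))
          exact Set.disjoint_of_subset (hS2sub i _) (hS2sub i _) (hR.2.1 _ _ hjj)
        · intro v
          obtain ⟨j, hj⟩ := hR.2.2.1 v.1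
          have hjU : j ∈ Used i := by
            simp only [hUdef, Finset.mem_filter]
            exact ⟨Finset.mem_univ _, ⟨v.1, hVmem.2 ⟨v.2, hj⟩⟩⟩
          refine ⟨(Used i).equivFin ⟨j, hjU⟩, fun k => ?_⟩
          simp only [hRidef, Equiv.symm_apply_apply]
          exact Finset.mem_image_of_mem _ (hVmem.2 ⟨v.2, hj⟩)
        · intro u v hne hnadj
          have hne' : u.1 ≠ v.1 := fun h => hne (Subtype.ext h)
          have hnadj' : ¬ G.Adj u.1 v.1 := by
            intro h; exact hnadj (by simpa using h)
          obtain ⟨j, hju, hjv⟩ := hR.2.2.2 u.1 v.1 hne' hnadj'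
          have hjU : j ∈ Used i := by
            simp only [hUdef, Finset.mem_filter]
            exact ⟨Finset.mem_univ _, ⟨u.1, hVmem.2 ⟨u.2, hju⟩⟩⟩
          refine ⟨(Used i).equivFin ⟨j, hjU⟩, fun k => ?_, fun k => ?_⟩
          · simp only [hRidef, Equiv.symm_apply_apply]
            exact Finset.mem_image_of_mem _ (hVmem.2 ⟨u.2, hju⟩)
          · simp only [hRidef, Equiv.symm_apply_apply]
            exact Finset.mem_image_of_mem _ (hVmem.2 ⟨v.2, hjv⟩)
      calc dVol (G.induce (D i : Set V)) d ≤ ∑ t, rvol (Ri t) := dVol_le hemb' hcov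
        _ = ∑ x : ↥(Used i), rvol (S2 i x.1) :=
            (Fintype.sum_equiv ((Used i).equivFin) _ _ fun x => by
              rw [hRidef]
              exact congrArg (fun y : ↥(Used i) => rvol (S2 i y.1))
                (Equiv.symm_apply_apply _ x).symm).symm
        _ = ∑ j ∈ Used i, rvol (S2 i j) := Finset.sum_coe_sort (Used i) (fun j => rvol (S2 i j))
    -- per-rectangle bound
    have hrect_le : ∀ j : Fin M,
        ∑ i : Fin m, (if j ∈ Used i then rvol (S2 i j) else 0) ≤ rvol (R j) := by
      intro j
      set T : Finset (Fin m) := Finset.univ.filter (fun i => j ∈ Used i) with hTdef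
      have hsum : ∑ i : Fin m, (if j ∈ Used i then rvol (S2 i j) else 0)
          = ∑ i ∈ T, rvol (S2 i j) := (Finset.sum_filter _ _).symm
      rw [hsum]
      have hpdisj : ∀ i ∈ T, ∀ i' ∈ T, i ≠ i' →
          Disjoint (Fintype.piFinset (S2 i j)) (Fintype.piFinset (S2 i' j)) := by
        intro i _ i' _ hii'
        rw [Finset.disjoint_left]
        intro x hx hy
        have hxk := (Fintype.mem_piFinset.1 hx) ⟨0, hd⟩
        have hyk := (Fintype.mem_piFinset.1 hy) ⟨0, hd⟩
        obtain ⟨u, hu, huk⟩ := Finset.mem_image.1 hxk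
        obtain ⟨w, hw, hwk⟩ := Finset.mem_image.1 hyk
        have hadj : G.Adj u w := hcross hii' (hVmem.1 hu).1 (hVmem.1 hw).1
        exact (hη.2 u w).1 hadj ⟨0, hd⟩ (by rw [huk, hwk])
      have hsub : T.biUnion (fun i => Fintype.piFinset (S2 i j)) ⊆ Fintype.piFinset (R j) := by
        intro x hx
        obtain ⟨i, _, hxi⟩ := Finset.mem_biUnion.1 hx
        refine Fintype.mem_piFinset.2 fun k => ?_
        obtain ⟨v, hv, hvk⟩ := Finset.mem_image.1 ((Fintype.mem_piFinset.1 hxi) k)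
        rw [← hvk]
        exact (hVmem.1 hv).2 k
      calc ∑ i ∈ T, rvol (S2 i j)
          = ∑ i ∈ T, (Fintype.piFinset (S2 i j)).card :=
            Finset.sum_congr rfl fun i _ => (card_piFinset_rvol _).symm
        _ = (T.biUnion (fun i => Fintype.piFinset (S2 i j))).card :=
            (Finset.card_biUnion hpdisj).symm
        _ ≤ (Fintype.piFinset (R j)).card := Finset.card_le_card hsub
        _ = rvol (R j) := card_piFinset_rvol _
    calc ∑ i, dVol (G.induce (D i : Set V)) d
        ≤ ∑ i, ∑ j ∈ Used i, rvol (S2 i j) := Finset.sum_le_sum fun i _ => hcomp_le i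
      _ = ∑ i : Fin m, ∑ j : Fin M, (if j ∈ Used i then rvol (S2 i j) else 0) := by
          refine Finset.sum_congr rfl fun i _ => ?_
          rw [← Finset.filter_univ_mem (Used i), Finset.sum_filter]
          simp [Finset.mem_filter]
      _ = ∑ j : Fin M, ∑ i : Fin m, (if j ∈ Used i then rvol (S2 i j) else 0) :=
          Finset.sum_comm
      _ ≤ ∑ j, rvol (R j) := Finset.sum_le_sum fun j _ => hrect_le j
      _ = dVol G d := hs.symm
  exact le_antisymm hle hge
end

section
/- For every ε > 0, almost all graphs have Prague dimension d satisfying d ≥ (1/(1+ε))·((n−1)/(2·log₂ n) − 1/n); that is, the proportion, among all 2^{n(n−1)/2} labeled simple graphs on the vertex set {1,…,n}, of those graphs G with dim_P(G) ≥ (1/(1+ε))·((n−1)/(2·log₂ n) − 1/n) tends to 1 as n → ∞. -/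
/-- The Prague dimension `dim_P(G)` of a finite simple graph `G`: the minimal `d` such
that there is an injective map `φ` from `V(G)` to `d`-tuples of natural numbers with
two vertices adjacent in `G` if and only if their images differ in every coordinate
(equivalently, `G` is an induced subgraph of a categorical product of `d` complete
graphs). -/
noncomputable def pragueDim {V : Type*} (G : SimpleGraph V) : ℕ :=
  sInf {d | ∃ φ : V → Fin d → ℕ, Function.Injective φ ∧
    ∀ u v : V, G.Adj u v ↔ ∀ k, φ u k ≠ φ v k}

/-!
A representation `φ : V → Fin d → ℕ` may be normalised so that every coordinate takes values in
`V` (replace a value by a canonical vertex of its fibre), and padded by identity coordinates up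
to any larger dimension. Hence at most `n ^ (n d)` graphs on `n` vertices have Prague dimension
at most `d`. Below the bound `d < (1/(1+ε))·((n−1)/(2 log₂ n) − 1/n)` this is at most
`2 ^ (N/(1+ε))` with `N = n(n−1)/2`, so these graphs form a proportion at most
`2 ^ (−ε N/(1+ε)) ≤ 2 ^ (−ε n/(1+ε)) → 0` of all `2 ^ N` graphs.
-/

open Function

namespace SimpleGraph

variable {V ι α : Type*}

def IsPragueRepr (G : SimpleGraph V) (φ : V → ι → ℕ) : Prop :=
  Injective φ ∧ ∀ u v, G.Adj u v ↔ ∀ k, φ u k ≠ φ v k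

theorem IsPragueRepr.comp_equiv {G : SimpleGraph V} {φ : V → ι → ℕ} (hφ : G.IsPragueRepr φ)
    {κ : Type*} (e : κ ≃ ι) : G.IsPragueRepr fun u k => φ u (e k) := by
  refine ⟨fun u v huv => hφ.1 <| funext fun i => ?_,
    fun u v => (hφ.2 u v).trans e.forall_congr_right.symm⟩
  simpa using congrFun huv (e.symm i)

theorem exists_isPragueRepr_option [Countable V] (G : SimpleGraph V) :
    ∃ φ : V → Option {p : V × V // ¬ G.Adj p.1 p.2} → ℕ, G.IsPragueRepr φ := by
  classical
  obtain ⟨c, hc⟩ := Countable.exists_injective_nat V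
  -- Coordinate `some (a, b)` identifies exactly `a` and `b`, which destroys the non-edge `ab` and
  -- nothing else; coordinate `none` makes the representation injective.
  refine ⟨fun u k => k.elim (c u) fun p => if u = p.1.1 ∨ u = p.1.2 then 0 else c u + 1,
    fun u v huv => hc (congrFun huv none), fun u v => ⟨fun hadj k => ?_, fun h => ?_⟩⟩
  · have hne : c u ≠ c v := hc.ne (G.ne_of_adj hadj)
    rcases k with _ | ⟨⟨a, b⟩, hab⟩
    · exact hne
    · dsimp only [Option.elim]
      split_ifs with hu hv hv <;> try omega
      rcases hu with rfl | rfl <;> rcases hv with rfl | rfl <;> simp_all [G.adj_comm]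
  · by_contra hnadj
    simpa using h (some ⟨(u, v), hnadj⟩)

theorem exists_isPragueRepr_fin [Finite V] (G : SimpleGraph V) :
    ∃ d, ∃ φ : V → Fin d → ℕ, G.IsPragueRepr φ := by
  obtain ⟨φ, hφ⟩ := G.exists_isPragueRepr_option
  exact ⟨_, _, hφ.comp_equiv (Finite.equivFin _).symm⟩

theorem exists_isPragueRepr_pragueDim [Finite V] (G : SimpleGraph V) :
    ∃ φ : V → Fin (pragueDim G) → ℕ, G.IsPragueRepr φ :=
  Nat.sInf_mem G.exists_isPragueRepr_fin

def ofCoords (ψ : V → ι → α) : SimpleGraph V where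
  Adj u v := u ≠ v ∧ ∀ k, ψ u k ≠ ψ v k
  symm := ⟨fun _ _ h => ⟨h.1.symm, fun k => (h.2 k).symm⟩⟩
  loopless := ⟨fun _ h => h.1 rfl⟩

theorem exists_ofCoords_eq {G : SimpleGraph V} {φ : V → ι → α}
    (hφ : ∀ u v, G.Adj u v ↔ ∀ k, φ u k ≠ φ v k) : ∃ ψ : V → ι → V, ofCoords ψ = G := by
  let ψ : V → ι → V := fun u k => (⟦u⟧ : Quotient (Setoid.ker (φ · k))).out
  have hψ : ∀ u v k, ψ u k = ψ v k ↔ φ u k = φ v k := fun _ _ _ =>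
    Quotient.out_inj.trans Quotient.eq
  refine ⟨ψ, ?_⟩
  ext u v
  change (u ≠ v ∧ ∀ k, ψ u k ≠ ψ v k) ↔ _
  rw [hφ u v]
  exact ⟨fun h k => mt (hψ u v k).2 (h.2 k),
    fun h => ⟨G.ne_of_adj ((hφ u v).2 h), fun k => mt (hψ u v k).1 (h k)⟩⟩

theorem ofCoords_extend {κ : Type*} (e : ι ↪ κ) (ψ : V → ι → V) :
    ofCoords (fun u => extend e (ψ u) fun _ => u) = ofCoords ψ := by
  ext u v
  simp only [ofCoords]
  refine and_congr_right fun huv => ⟨fun h k => by simpa [e.injective.extend_apply] using h (e k),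
    fun h k => ?_⟩
  by_cases hk : ∃ i, e i = k
  · obtain ⟨i, rfl⟩ := hk
    simpa [e.injective.extend_apply] using h i
  · simpa [extend_apply' _ _ _ hk] using huv

theorem exists_ofCoords_eq_of_pragueDim_le [Finite V] {G : SimpleGraph V} {d : ℕ}
    (h : pragueDim G ≤ d) : ∃ ψ : V → Fin d → V, ofCoords ψ = G := by
  obtain ⟨φ, hφ⟩ := G.exists_isPragueRepr_pragueDim
  obtain ⟨ψ, hψ⟩ := exists_ofCoords_eq hφ.2
  exact ⟨fun u => extend (Fin.castLEEmb h) (ψ u) fun _ => u, (ofCoords_extend _ ψ).trans hψ⟩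

theorem card_pragueDim_le [Finite V] (d : ℕ) :
    Nat.card {G : SimpleGraph V // pragueDim G ≤ d} ≤ Nat.card V ^ (Nat.card V * d) :=
  calc Nat.card {G : SimpleGraph V // pragueDim G ≤ d}
      ≤ Nat.card (Set.range (ofCoords : (V → Fin d → V) → SimpleGraph V)) :=
        Nat.card_mono (Set.toFinite _) fun _ => exists_ofCoords_eq_of_pragueDim_le
    _ ≤ Nat.card (V → Fin d → V) := Finite.card_range_le _
    _ = Nat.card V ^ (Nat.card V * d) := by
        rw [Nat.card_fun, Nat.card_fun, Nat.card_fin, ← pow_mul, mul_comm]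

def equivSetNotDiag (V : Type*) : SimpleGraph V ≃ Set {e : Sym2 V // ¬ e.IsDiag} where
  toFun G := Subtype.val ⁻¹' G.edgeSet
  invFun s := fromEdgeSet (Subtype.val '' s)
  left_inv G := by ext u v; simpa using G.ne_of_adj
  right_inv s := by ext ⟨e, he⟩; simp [he]

end SimpleGraph

theorem natCard_simpleGraph (V : Type*) [Finite V] :
    Nat.card (SimpleGraph V) = 2 ^ (Nat.card V).choose 2 := by
  classical
  have := Fintype.ofFinite V
  rw [Nat.card_congr (SimpleGraph.equivSetNotDiag V), Nat.card_eq_fintype_card, Fintype.card_set,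
    ← Nat.card_eq_fintype_card, Sym2.natCard_subtype_not_diag]

theorem Nat.card_subtype_div_eq_one_sub {α : Type*} [Finite α] [Nonempty α] (p : α → Prop) :
    (Nat.card {a // p a} : ℝ) / Nat.card α = 1 - Nat.card {a // ¬ p a} / Nat.card α := by
  have hα : (Nat.card α : ℝ) ≠ 0 := Nat.cast_ne_zero.2 Nat.card_pos.ne'
  rw [eq_sub_iff_add_eq, ← add_div, div_eq_one_iff_eq hα]
  exact_mod_cast Set.ncard_add_ncard_compl {a | p a}

theorem Real.pow_le_rpow_of_mul_logb_le {b x y : ℝ} {D : ℕ} (hb : 1 < b) (hx : 0 < x)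
    (h : D * Real.logb b x ≤ y) : x ^ D ≤ b ^ y :=
  calc x ^ D = (b ^ Real.logb b x) ^ D := by rw [Real.rpow_logb (by linarith) hb.ne' hx]
    _ = b ^ (Real.logb b x * D) := (Real.rpow_mul_natCast (by linarith) _ _).symm
    _ ≤ b ^ y := Real.rpow_le_rpow_of_exponent_le hb.le (by linarith)

theorem mul_floor_mul_logb_le {c : ℝ} (hc : 0 ≤ c) {n : ℕ} (hn : 2 ≤ n) :
    ((n * ⌊c * ((n - 1) / (2 * Real.logb 2 n) - 1 / n)⌋₊ : ℕ) : ℝ) * Real.logb 2 n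
      ≤ c * n.choose 2 := by
  have hn' : (2 : ℝ) ≤ n := by exact_mod_cast hn
  have hL : 0 < Real.logb 2 n := Real.logb_pos one_lt_two (by linarith)
  set B := c * ((n - 1) / (2 * Real.logb 2 n) - 1 / n)
  rw [Nat.cast_choose_two, Nat.cast_mul]
  rcases le_or_gt B 0 with hB | hB
  · rw [Nat.floor_of_nonpos hB, Nat.cast_zero, mul_zero, zero_mul]
    exact mul_nonneg hc (by nlinarith)
  · calc n * (⌊B⌋₊ : ℝ) * Real.logb 2 n ≤ n * B * Real.logb 2 n := by
          gcongr; exact Nat.floor_le hB.le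
      _ = c * (n * (n - 1) / 2 - Real.logb 2 n) := by simp only [B]; field_simp
      _ ≤ c * (n * (n - 1) / 2) := by gcongr; linarith

theorem card_not_le_pragueDim_div_le {c : ℝ} (hc : 0 ≤ c) {n : ℕ} (hn : 2 ≤ n) :
    (Nat.card {G : SimpleGraph (Fin n) //
        ¬ c * (((n : ℝ) - 1) / (2 * Real.logb 2 n) - 1 / n) ≤ pragueDim G} : ℝ)
      / Nat.card (SimpleGraph (Fin n)) ≤ (2 ^ (c - 1) : ℝ) ^ n.choose 2 := by
  set B := c * (((n : ℝ) - 1) / (2 * Real.logb 2 n) - 1 / n)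
  have hcount : Nat.card {G : SimpleGraph (Fin n) // ¬ B ≤ pragueDim G} ≤ n ^ (n * ⌊B⌋₊) := by
    have h := SimpleGraph.card_pragueDim_le (V := Fin n) ⌊B⌋₊
    rw [Nat.card_fin] at h
    exact le_trans (Nat.card_mono (Set.toFinite _) fun _ hG => Nat.le_floor (not_le.1 hG).le) h
  calc (Nat.card {G : SimpleGraph (Fin n) // ¬ B ≤ pragueDim G} : ℝ)
        / Nat.card (SimpleGraph (Fin n))
      ≤ (n : ℝ) ^ (n * ⌊B⌋₊) / 2 ^ (n.choose 2 : ℝ) := by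
        rw [natCard_simpleGraph, Nat.card_fin, Nat.cast_pow, Nat.cast_ofNat, Real.rpow_natCast]
        gcongr
        exact_mod_cast hcount
    _ ≤ 2 ^ (c * n.choose 2) / 2 ^ (n.choose 2 : ℝ) := by
        gcongr
        exact Real.pow_le_rpow_of_mul_logb_le one_lt_two (by positivity)
          (mul_floor_mul_logb_le hc hn)
    _ = (2 ^ (c - 1) : ℝ) ^ n.choose 2 := by
        rw [← Real.rpow_sub two_pos, ← Real.rpow_mul_natCast two_pos.le]
        ring_nf

open Filter in
/-- For every `ε > 0`, almost all graphs have Prague dimension at least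
`(1/(1+ε))·((n−1)/(2·log₂ n) − 1/n)`: the proportion, among all `2^(n(n−1)/2)` labeled
simple graphs on `{1,…,n}`, of graphs satisfying this lower bound tends to `1` as
`n → ∞`. -/
theorem almost_all_graphs_pragueDim_lower_bound (ε : ℝ) (hε : 0 < ε) :
    Tendsto (fun n : ℕ =>
      (Nat.card {G : SimpleGraph (Fin n) //
          (1 / (1 + ε)) * (((n : ℝ) - 1) / (2 * Real.logb 2 n) - 1 / n)
            ≤ (pragueDim G : ℝ)} : ℝ) / 2 ^ (n * (n - 1) / 2))
      atTop (nhds 1) := by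
  have hc : 1 / (1 + ε) < 1 := by rw [div_lt_one (by linarith)]; linarith
  have hr : (2 : ℝ) ^ (1 / (1 + ε) - 1) < 1 :=
    Real.rpow_lt_one_of_one_lt_of_neg one_lt_two (by linarith)
  have hbad : Tendsto (fun n : ℕ => (Nat.card {G : SimpleGraph (Fin n) //
        ¬ (1 / (1 + ε)) * (((n : ℝ) - 1) / (2 * Real.logb 2 n) - 1 / n) ≤ pragueDim G} : ℝ)
      / Nat.card (SimpleGraph (Fin n))) atTop (nhds 0) := by
    refine squeeze_zero' (Eventually.of_forall fun n => by positivity)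
      ((eventually_ge_atTop 3).mono fun n hn => ?_)
      (tendsto_pow_atTop_nhds_zero_of_lt_one (by positivity) hr)
    have hn_le : n ≤ n.choose 2 := by
      rw [Nat.choose_two_right, Nat.le_div_iff_mul_le two_pos]
      exact Nat.mul_le_mul_left n (by omega)
    exact (card_not_le_pragueDim_div_le (by positivity) (by omega)).trans
      (pow_le_pow_of_le_one (by positivity) hr.le hn_le)
  have hcard (n : ℕ) : (2 : ℝ) ^ (n * (n - 1) / 2) = Nat.card (SimpleGraph (Fin n)) := by
    rw [natCard_simpleGraph, Nat.card_fin, Nat.choose_two_right]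
    push_cast
    rfl
  have hgood := (tendsto_const_nhds (x := (1 : ℝ))).sub hbad
  rw [sub_zero] at hgood
  exact hgood.congr fun n => by rw [hcard]; exact (Nat.card_subtype_div_eq_one_sub _).symm
end

section
/- Let G be a finite simple graph and k ≥ 1 an integer. Then G has a clique k-cover if and only if G is an intersection graph of a hypergraph of rank at most k; that is, if and only if there exists an assignment to each vertex v of G of a nonempty finite set F(v) with |F(v)| ≤ k such that any two distinct vertices u and v are adjacent in G exactly when F(u) ∩ F(v) ≠ ∅. -/
/-- A clique `k`-cover of a finite simple graph `G`: a finite family of cliques of `G`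
such that every edge of `G` is contained in at least one clique of the family and every
vertex of `G` belongs to at most `k` cliques of the family. -/
def HasCliqueKCover {V : Type*} [Fintype V] [DecidableEq V] (G : SimpleGraph V) (k : ℕ) : Prop :=
  ∃ (m : ℕ) (C : Fin m → Finset V),
    (∀ i, G.IsClique (C i : Set V)) ∧
    (∀ u v : V, G.Adj u v → ∃ i, u ∈ C i ∧ v ∈ C i) ∧
    (∀ v : V, (Finset.univ.filter fun i => v ∈ C i).card ≤ k)

/-- The rank dimension `dim_R(G)`: the minimal `k` for which `G` has a clique `k`-cover. -/
noncomputable def rankDim {V : Type*} [Fintype V] [DecidableEq V] (G : SimpleGraph V) : ℕ :=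
  sInf {k | HasCliqueKCover G k}

/-- The Prague dimension `dim_P(Ḡ)` of the complement of `G`: the minimal `k` such that
there is an injective map `φ` from `V(G)` to `k`-tuples of natural numbers with the
property that any two vertices whose images differ in every coordinate are non-adjacent
in `G`. -/
noncomputable def pragueDimCompl {V : Type*} (G : SimpleGraph V) : ℕ :=
  sInf {k | ∃ φ : V → Fin k → ℕ, Function.Injective φ ∧
    ∀ u v : V, (∀ j, φ u j ≠ φ v j) → ¬ G.Adj u v}

/-- A finite simple graph `G` has a clique `k`-cover (`k ≥ 1`) if and
only if it is an intersection graph of a hypergraph of rank at most `k`: there is an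
assignment to each vertex `v` of a nonempty finite set `F v` with `|F v| ≤ k` such that
two distinct vertices are adjacent exactly when the assigned sets intersect. -/
theorem hasCliqueKCover_iff_intersection_graph {V : Type*} [Fintype V] [DecidableEq V]
    (G : SimpleGraph V) (k : ℕ) (hk : 1 ≤ k) :
    HasCliqueKCover G k ↔
      ∃ F : V → Finset ℕ,
        (∀ v, (F v).Nonempty) ∧
        (∀ v, (F v).card ≤ k) ∧
        (∀ u v : V, u ≠ v → (G.Adj u v ↔ (F u ∩ F v).Nonempty)) := by
  constructor
  · rintro ⟨m, C, hclique, hcover, hcard⟩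
    classical
    set e := Fintype.equivFin V with he
    refine ⟨fun v => if h : ((Finset.univ.filter fun i : Fin m => v ∈ C i).image Fin.val).Nonempty
        then (Finset.univ.filter fun i : Fin m => v ∈ C i).image Fin.val
        else {m + (e v).val}, ?_, ?_, ?_⟩
    · intro v
      by_cases h : ((Finset.univ.filter fun i : Fin m => v ∈ C i).image Fin.val).Nonempty
      · simp [h]
      · simp [h]
    · intro v
      by_cases h : ((Finset.univ.filter fun i : Fin m => v ∈ C i).image Fin.val).Nonempty
      · simp only [h, dif_pos]
        exact le_trans (Finset.card_image_le) (hcard v)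
      · simpa [h] using hk
    · intro u v huv
      constructor
      · intro hadj
        obtain ⟨i, hu, hv⟩ := hcover u v hadj
        have h1 : ((Finset.univ.filter fun j : Fin m => u ∈ C j).image Fin.val).Nonempty :=
          ⟨i.val, Finset.mem_image.mpr ⟨i, by simp [hu], rfl⟩⟩
        have h2 : ((Finset.univ.filter fun j : Fin m => v ∈ C j).image Fin.val).Nonempty :=
          ⟨i.val, Finset.mem_image.mpr ⟨i, by simp [hv], rfl⟩⟩
        refine ⟨i.val, ?_⟩
        simp only [h1, h2, dif_pos, Finset.mem_inter]
        exact ⟨Finset.mem_image.mpr ⟨i, by simp [hu], rfl⟩,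
               Finset.mem_image.mpr ⟨i, by simp [hv], rfl⟩⟩
      · rintro ⟨n, hn⟩
        rw [Finset.mem_inter] at hn
        obtain ⟨hnu, hnv⟩ := hn
        by_cases h1 : ((Finset.univ.filter fun j : Fin m => u ∈ C j).image Fin.val).Nonempty
        · by_cases h2 : ((Finset.univ.filter fun j : Fin m => v ∈ C j).image Fin.val).Nonempty
          · simp only [h1, dif_pos] at hnu
            simp only [h2, dif_pos] at hnv
            obtain ⟨i, hi, hiv⟩ := Finset.mem_image.mp hnu
            obtain ⟨j, hj, hjv⟩ := Finset.mem_image.mp hnv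
            have : i = j := Fin.val_injective (hiv.trans hjv.symm)
            subst this
            simp only [Finset.mem_filter] at hi hj
            exact hclique i hi.2 hj.2 huv
          · simp only [h2, dif_neg, not_false_iff, Finset.mem_singleton] at hnv
            simp only [h1, dif_pos] at hnu
            obtain ⟨i, _, hiv⟩ := Finset.mem_image.mp hnu
            have := i.isLt
            omega
        · simp only [h1, dif_neg, not_false_iff, Finset.mem_singleton] at hnu
          by_cases h2 : ((Finset.univ.filter fun j : Fin m => v ∈ C j).image Fin.val).Nonempty
          · simp only [h2, dif_pos] at hnv
            obtain ⟨j, _, hjv⟩ := Finset.mem_image.mp hnv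
            have := j.isLt
            omega
          · simp only [h2, dif_neg, not_false_iff, Finset.mem_singleton] at hnv
            have : (e u).val = (e v).val := by omega
            exact absurd (e.injective (Fin.val_injective this)) huv
  · rintro ⟨F, hne, hcard, hadj⟩
    classical
    set S : Finset ℕ := Finset.univ.biUnion F with hS
    have hsub : ∀ v, F v ⊆ S := fun v => Finset.subset_biUnion_of_mem F (Finset.mem_univ v)
    refine ⟨S.card, fun i => Finset.univ.filter fun v => ((S.equivFin.symm i : S) : ℕ) ∈ F v,
      ?_, ?_, ?_⟩
    · intro i u hu v hv huv
      simp only [Finset.coe_filter, Set.mem_setOf_eq, Finset.mem_univ, true_and] at hu hv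
      exact (hadj u v huv).mpr ⟨_, Finset.mem_inter.mpr ⟨hu, hv⟩⟩
    · intro u v huvadj
      obtain ⟨n, hn⟩ := (hadj u v huvadj.ne).mp huvadj
      rw [Finset.mem_inter] at hn
      have hnS : n ∈ S := hsub u hn.1
      refine ⟨S.equivFin ⟨n, hnS⟩, ?_, ?_⟩ <;>
        simp [Finset.mem_filter, hn.1, hn.2]
    · intro v
      have : (Finset.univ.filter fun i => v ∈ Finset.univ.filter
          fun w => ((S.equivFin.symm i : S) : ℕ) ∈ F w).card
          = (S.filter fun n => n ∈ F v).card := by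
        apply Finset.card_bij (fun i _ => ((S.equivFin.symm i : S) : ℕ))
        · intro i hi
          simp only [Finset.mem_filter, Finset.mem_univ, true_and] at hi ⊢
          exact ⟨(S.equivFin.symm i).2, hi⟩
        · intro i _ j _ hij
          have : (S.equivFin.symm i) = (S.equivFin.symm j) := Subtype.ext hij
          exact S.equivFin.symm.injective this
        · intro n hn
          simp only [Finset.mem_filter] at hn
          refine ⟨S.equivFin ⟨n, hn.1⟩, ?_, by simp⟩
          simp [Finset.mem_filter, hn.2]
      rw [this]
      calc (S.filter fun n => n ∈ F v).card ≤ (F v).card := by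
            apply Finset.card_le_card
            intro n hn
            exact (Finset.mem_filter.mp hn).2
        _ ≤ k := hcard v
end
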